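/- arXiv:2605.26392 — 5 statements merged into one kernel-verified Lean document; each statement's English description precedes it below -/
import Mathlib

section
/- In computing the protection function, the normalized deviations can be restricted to nonnegative values acting on the absolute values of the decision variables: for all x : J → ℝ and Γ ≥ 0, β(x, Γ) = sSup {Σ_j â j * z j * |x j| | z : J → ℝ, ∀ j, 0 ≤ z j ≤ 1, and Σ_j z j ≤ Γ}. -/
open Finset

/-- The budgeted uncertainty set `Z(Γ)` of Bertsimas–Sim:
normalized deviations `z` with `|z j| ≤ 1` for all `j` and `Σ_j |z j| ≤ Γ`. -/
def budgetSet (J : Type*) [Fintype J] (Γ : ℝ) : Set (J → ℝ) :=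
  {z | (∀ j, |z j| ≤ 1) ∧ ∑ j, |z j| ≤ Γ}

/-- The protection function `β(x, Γ) = sSup {Σ_j â j * z j * x j | z ∈ Z(Γ)}`. -/
noncomputable def protection {J : Type*} [Fintype J] (ahat x : J → ℝ) (Γ : ℝ) : ℝ :=
  sSup ((fun z : J → ℝ => ∑ j, ahat j * z j * x j) '' budgetSet J Γ)

theorem protection_eq_nonneg_deviations {J : Type*} [Fintype J]
    (ahat : J → ℝ) (hahat : ∀ j, 0 ≤ ahat j) (x : J → ℝ) (Γ : ℝ) (hΓ : 0 ≤ Γ) :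
    protection ahat x Γ =
      sSup {s : ℝ | ∃ z : J → ℝ, (∀ j, 0 ≤ z j ∧ z j ≤ 1) ∧ (∑ j, z j) ≤ Γ ∧
        s = ∑ j, ahat j * z j * |x j|} := by
  unfold protection
  apply csSup_eq_csSup_of_forall_exists_le
  · rintro a ⟨z, ⟨hz1, hz2⟩, rfl⟩
    refine ⟨∑ j, ahat j * |z j| * |x j|, ⟨fun j => |z j|, fun j => ⟨abs_nonneg _, hz1 j⟩,
      hz2, rfl⟩, ?_⟩
    apply Finset.sum_le_sum
    intro j _
    have : z j * x j ≤ |z j| * |x j| := by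
      calc z j * x j ≤ |z j * x j| := le_abs_self _
        _ = |z j| * |x j| := abs_mul _ _
    have := mul_le_mul_of_nonneg_left this (hahat j)
    linarith [this]
  · rintro b ⟨z, hz1, hz2, rfl⟩
    refine ⟨∑ j, ahat j * z j * |x j|, ⟨fun j => if x j < 0 then -z j else z j, ⟨?_, ?_⟩, ?_⟩,
      le_refl _⟩
    · intro j
      rw [abs_le]
      by_cases h : x j < 0 <;> simp only [h, if_true, if_false, abs_neg]
      · exact ⟨by linarith [(hz1 j).2], by linarith [(hz1 j).1]⟩
      · exact ⟨by linarith [(hz1 j).1], (hz1 j).2⟩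
    · calc ∑ j, |if x j < 0 then -z j else z j| = ∑ j, z j := by
            apply Finset.sum_congr rfl
            intro j _
            by_cases h : x j < 0 <;> simp [h, abs_of_nonneg (hz1 j).1]
        _ ≤ Γ := hz2
    · apply Finset.sum_congr rfl
      intro j _
      by_cases h : x j < 0
      · simp only [h, if_true, abs_of_neg h]; ring
      · simp [h, abs_of_nonneg (le_of_not_gt h)]
end

section
/- Soundness of the linear reformulation with auxiliary variables: let x : J → ℝ, Γ ≥ 0, p ∈ ℝ with p ≥ 0, and q : J → ℝ with q j ≥ 0 and p + q j ≥ â j * |x j| for all j. Then β(x, Γ) ≤ Γ * p + Σ_j q j; consequently, if Σ_j a j * x j + Γ * p + Σ_j q j ≤ b, then the robust constraint Σ_j a j * x j + β(x, Γ) ≤ b holds. -/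
open Finset

theorem linear_reformulation_sound {J : Type*} [Fintype J]
    (ahat : J → ℝ) (hahat : ∀ j, 0 ≤ ahat j) (a : J → ℝ) (b : ℝ)
    (x : J → ℝ) (Γ : ℝ) (hΓ : 0 ≤ Γ)
    (p : ℝ) (hp : 0 ≤ p) (q : J → ℝ) (hq : ∀ j, 0 ≤ q j)
    (hpq : ∀ j, ahat j * |x j| ≤ p + q j) :
    protection ahat x Γ ≤ Γ * p + ∑ j, q j ∧
    ((∑ j, a j * x j) + Γ * p + (∑ j, q j) ≤ b →
      (∑ j, a j * x j) + protection ahat x Γ ≤ b) := by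
  have hmain : protection ahat x Γ ≤ Γ * p + ∑ j, q j := by
    apply Real.sSup_le
    · rintro y ⟨z, ⟨hz1, hz2⟩, rfl⟩
      calc ∑ j, ahat j * z j * x j
          ≤ ∑ j, (p * |z j| + q j) := by
            apply Finset.sum_le_sum
            intro j _
            have h1 : ahat j * z j * x j ≤ ahat j * |x j| * |z j| := by
              calc ahat j * z j * x j ≤ |ahat j * z j * x j| := le_abs_self _
                _ = ahat j * |x j| * |z j| := by
                    rw [abs_mul, abs_mul, abs_of_nonneg (hahat j)]; ring
            have h2 : ahat j * |x j| * |z j| ≤ (p + q j) * |z j| :=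
              mul_le_mul_of_nonneg_right (hpq j) (abs_nonneg _)
            have h3 : (p + q j) * |z j| ≤ p * |z j| + q j := by
              have := mul_le_mul_of_nonneg_left (hz1 j) (hq j)
              nlinarith
            linarith
        _ = p * ∑ j, |z j| + ∑ j, q j := by
            rw [Finset.sum_add_distrib, Finset.mul_sum]
        _ ≤ Γ * p + ∑ j, q j := by
            have := mul_le_mul_of_nonneg_left hz2 hp
            nlinarith
    · exact add_nonneg (mul_nonneg hΓ hp) (Finset.sum_nonneg fun j _ => hq j)
  refine ⟨hmain, fun h => ?_⟩
  linarith
end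

section
/- Exactness of the linear reformulation (strong LP duality with attainment): for every x : J → ℝ and every Γ ≥ 0 there exist p ∈ ℝ and q : J → ℝ with p ≥ 0, q j ≥ 0 for all j, p + q j ≥ â j * |x j| for all j, and Γ * p + Σ_j q j = β(x, Γ). Hence β(x, Γ) equals the infimum of Γ * p + Σ_j q j over all such feasible pairs (p, q). -/
open Finset

lemma weak_duality {J : Type*} [Fintype J]
    (ahat : J → ℝ) (hahat : ∀ j, 0 ≤ ahat j) (x : J → ℝ) (Γ : ℝ)
    (p : ℝ) (q : J → ℝ) (hp : 0 ≤ p) (hq : ∀ j, 0 ≤ q j)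
    (hfeas : ∀ j, ahat j * |x j| ≤ p + q j)
    (z : J → ℝ) (hz : z ∈ budgetSet J Γ) :
    ∑ j, ahat j * z j * x j ≤ Γ * p + ∑ j, q j := by
  obtain ⟨hz1, hz2⟩ := hz
  have h1 : ∑ j, ahat j * z j * x j ≤ ∑ j, (p + q j) * |z j| := by
    apply Finset.sum_le_sum
    intro j _
    have hzx : z j * x j ≤ |z j| * |x j| :=
      (le_abs_self _).trans (le_of_eq (abs_mul _ _))
    have h2 : ahat j * z j * x j ≤ ahat j * |x j| * |z j| := by
      have := mul_le_mul_of_nonneg_left hzx (hahat j)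
      nlinarith
    exact h2.trans (mul_le_mul_of_nonneg_right (hfeas j) (abs_nonneg _))
  have h2 : ∑ j, (p + q j) * |z j| = p * ∑ j, |z j| + ∑ j, q j * |z j| := by
    rw [Finset.mul_sum, ← Finset.sum_add_distrib]
    exact Finset.sum_congr rfl (fun j _ => by ring)
  have h3 : p * ∑ j, |z j| ≤ Γ * p := by
    rw [mul_comm Γ p]; exact mul_le_mul_of_nonneg_left hz2 hp
  have h4 : ∑ j, q j * |z j| ≤ ∑ j, q j := by
    apply Finset.sum_le_sum
    intro j _
    nth_rewrite 2 [← mul_one (q j)]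
    exact mul_le_mul_of_nonneg_left (hz1 j) (hq j)
  linarith [h1, h2 ▸ (add_le_add h3 h4)]

theorem linear_reformulation_exact {J : Type*} [Fintype J]
    (ahat : J → ℝ) (hahat : ∀ j, 0 ≤ ahat j) (x : J → ℝ) (Γ : ℝ) (hΓ : 0 ≤ Γ) :
    (∃ p : ℝ, ∃ q : J → ℝ, 0 ≤ p ∧ (∀ j, 0 ≤ q j) ∧
      (∀ j, ahat j * |x j| ≤ p + q j) ∧
      Γ * p + (∑ j, q j) = protection ahat x Γ) ∧
    protection ahat x Γ =
      sInf {v : ℝ | ∃ p : ℝ, ∃ q : J → ℝ, 0 ≤ p ∧ (∀ j, 0 ≤ q j) ∧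
        (∀ j, ahat j * |x j| ≤ p + q j) ∧ v = Γ * p + ∑ j, q j} := by
  classical
  set c : J → ℝ := fun j => ahat j * |x j| with hc_def
  have hc : ∀ j, 0 ≤ c j := fun j => mul_nonneg (hahat j) (abs_nonneg _)
  -- the candidate threshold values
  set V : Finset ℝ := insert 0 (Finset.image c Finset.univ) with hV_def
  have hVne : V.Nonempty := ⟨0, Finset.mem_insert_self _ _⟩
  set S : Finset ℝ := V.filter
      (fun s => ((Finset.univ.filter (fun j => s < c j)).card : ℝ) ≤ Γ) with hS_def
  have hSne : S.Nonempty := by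
    refine ⟨V.max' hVne, Finset.mem_filter.mpr ⟨V.max'_mem hVne, ?_⟩⟩
    have : (Finset.univ.filter (fun j => V.max' hVne < c j)) = ∅ := by
      apply Finset.filter_false_of_mem
      intro j _
      have : c j ≤ V.max' hVne :=
        V.le_max' _ (Finset.mem_insert_of_mem (Finset.mem_image_of_mem c (Finset.mem_univ j)))
      linarith
    rw [this]; simpa using hΓ
  set t : ℝ := S.min' hSne with ht_def
  have htS : t ∈ S := S.min'_mem hSne
  have htV : t ∈ V := (Finset.mem_filter.mp htS).1
  have ht0 : 0 ≤ t := by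
    rcases Finset.mem_insert.mp htV with h | h
    · exact le_of_eq h.symm
    · obtain ⟨j, _, hj⟩ := Finset.mem_image.mp h
      exact hj ▸ hc j
  set A : Finset J := Finset.univ.filter (fun j => t < c j) with hA_def
  set E : Finset J := Finset.univ.filter (fun j => c j = t) with hE_def
  have hmΓ : (A.card : ℝ) ≤ Γ := (Finset.mem_filter.mp htS).2
  set m : ℝ := (A.card : ℝ) with hm_def
  set r : ℝ := min (Γ - m) (E.card : ℝ) with hr_def
  have hr0 : 0 ≤ r := le_min (by linarith) (Nat.cast_nonneg _)
  -- key: if 0 < t then Γ ≤ m + |E|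
  have hB : 0 < t → Γ ≤ m + (E.card : ℝ) := by
    intro htpos
    -- the largest candidate value strictly below t
    set V' : Finset ℝ := V.filter (fun s => s < t) with hV'_def
    have hV'ne : V'.Nonempty :=
      ⟨0, Finset.mem_filter.mpr ⟨Finset.mem_insert_self _ _, htpos⟩⟩
    set t' : ℝ := V'.max' hV'ne with ht'_def
    have ht'V' : t' ∈ V' := V'.max'_mem hV'ne
    have ht'V : t' ∈ V := (Finset.mem_filter.mp ht'V').1
    have ht'lt : t' < t := (Finset.mem_filter.mp ht'V').2
    have ht'nS : t' ∉ S := by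
      intro h
      exact absurd (S.min'_le _ h) (not_le.mpr ht'lt)
    have hcount : Γ < ((Finset.univ.filter (fun j => t' < c j)).card : ℝ) := by
      by_contra h
      exact ht'nS (Finset.mem_filter.mpr ⟨ht'V, not_lt.mp h⟩)
    have hsub : (Finset.univ.filter (fun j => t' < c j)) ⊆ A ∪ E := by
      intro j hj
      have hj' : t' < c j := (Finset.mem_filter.mp hj).2
      rcases lt_trichotomy (c j) t with h | h | h
      · -- c j < t, so c j ∈ V', so c j ≤ t', contradiction
        exfalso
        have : c j ∈ V' := Finset.mem_filter.mpr
          ⟨Finset.mem_insert_of_mem (Finset.mem_image_of_mem c (Finset.mem_univ j)), h⟩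
        exact absurd (V'.le_max' _ this) (not_le.mpr hj')
      · exact Finset.mem_union_right _ (Finset.mem_filter.mpr ⟨Finset.mem_univ j, h⟩)
      · exact Finset.mem_union_left _ (Finset.mem_filter.mpr ⟨Finset.mem_univ j, h⟩)
    have hdisj : Disjoint A E := by
      rw [Finset.disjoint_filter]
      intro j _ hj h
      exact absurd h.symm (ne_of_lt hj)
    have h1 := Finset.card_le_card hsub
    have hcard : (A ∪ E).card = A.card + E.card := Finset.card_union_of_disjoint hdisj
    rw [hcard] at h1
    have h2 : ((Finset.univ.filter (fun j => t' < c j)).card : ℝ) ≤ m + (E.card : ℝ) := by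
      rw [hm_def]
      exact_mod_cast h1
    linarith
  have htr : t * r = t * (Γ - m) := by
    rcases eq_or_lt_of_le ht0 with h | h
    · rw [← h]; ring
    · have := hB h
      have : r = Γ - m := min_eq_left (by linarith)
      rw [this]
  -- the dual solution
  set q : J → ℝ := fun j => max (c j - t) 0 with hq_def
  have hq0 : ∀ j, 0 ≤ q j := fun j => le_max_right _ _
  have hfeas : ∀ j, c j ≤ t + q j := by
    intro j
    have : c j - t ≤ q j := le_max_left _ _
    linarith
  have hqsum : ∑ j, q j = ∑ j ∈ A, (c j - t) := by
    rw [hA_def, Finset.sum_filter]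
    apply Finset.sum_congr rfl
    intro j _
    by_cases h : t < c j
    · rw [if_pos h]
      simp only [hq_def]
      exact max_eq_left (by linarith : (0:ℝ) ≤ c j - t)
    · rw [if_neg h]
      simp only [hq_def]
      exact max_eq_right (by push_neg at h; linarith : c j - t ≤ (0:ℝ))
  -- the primal solution
  set w : J → ℝ := fun j => if t < c j then 1 else if c j = t then r / (E.card : ℝ) else 0
    with hw_def
  have hEcard : ∀ j ∈ E, w j = r / (E.card : ℝ) := by
    intro j hj
    have hj' : c j = t := (Finset.mem_filter.mp hj).2
    simp only [hw_def]
    rw [if_neg (by rw [hj']; exact lt_irrefl t), if_pos hj']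
  have hw0 : ∀ j, 0 ≤ w j := by
    intro j
    rw [hw_def]
    dsimp only
    split_ifs with h1 h2
    · norm_num
    · exact div_nonneg hr0 (Nat.cast_nonneg _)
    · exact le_refl 0
  have hw1 : ∀ j, w j ≤ 1 := by
    intro j
    rw [hw_def]
    dsimp only
    split_ifs with h1 h2
    · exact le_refl 1
    · rcases Nat.eq_zero_or_pos E.card with h | h
      · rw [h, Nat.cast_zero, div_zero]
        exact zero_le_one
      · rw [div_le_one (by exact_mod_cast h)]
        exact min_le_right _ _
    · norm_num
  have hr_edge : (E.card : ℝ) = 0 → r = 0 := by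
    intro h
    exact le_antisymm (le_trans (min_le_right _ _) (le_of_eq h)) hr0
  have hw_split : ∀ j, w j =
      (if t < c j then (1:ℝ) else 0) + (if c j = t then r / (E.card : ℝ) else 0) := by
    intro j
    rw [hw_def]
    dsimp only
    split_ifs with h1 h2
    · exact absurd h2 (ne_of_gt h1)
    · ring
    · ring
    · ring
  have hEsum : ∀ g : J → ℝ, (∑ j, (if c j = t then g j else 0)) = ∑ j ∈ E, g j := by
    intro g
    rw [hE_def, Finset.sum_filter]
  have hAsum : ∀ g : J → ℝ, (∑ j, (if t < c j then g j else 0)) = ∑ j ∈ A, g j := by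
    intro g
    rw [hA_def, Finset.sum_filter]
  have hEr : ∑ j ∈ E, r / (E.card : ℝ) = r := by
    rw [Finset.sum_const, nsmul_eq_mul]
    rcases Nat.eq_zero_or_pos E.card with h | h
    · rw [h, hr_edge (by rw [h, Nat.cast_zero])]
      norm_num
    · rw [mul_comm]
      exact div_mul_cancel₀ r (Nat.cast_ne_zero.mpr h.ne')
  have hwsum : ∑ j, w j = m + r := by
    calc ∑ j, w j
        = ∑ j, ((if t < c j then (1:ℝ) else 0) + (if c j = t then r / (E.card : ℝ) else 0)) :=
          Finset.sum_congr rfl (fun j _ => hw_split j)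
      _ = (∑ j, (if t < c j then (1:ℝ) else 0)) +
          (∑ j, (if c j = t then r / (E.card : ℝ) else 0)) := Finset.sum_add_distrib
      _ = (∑ j ∈ A, (1:ℝ)) + ∑ j ∈ E, r / (E.card : ℝ) := by
          rw [hAsum (fun _ => (1:ℝ)), hEsum (fun _ => r / (E.card : ℝ))]
      _ = m + r := by rw [Finset.sum_const, nsmul_eq_mul, mul_one, hEr, hm_def]
  have hEtr : ∑ j ∈ E, c j * (r / (E.card : ℝ)) = t * r := by
    have : ∀ j ∈ E, c j * (r / (E.card : ℝ)) = t * (r / (E.card : ℝ)) := by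
      intro j hj
      rw [(Finset.mem_filter.mp hj).2]
    rw [Finset.sum_congr rfl this, Finset.sum_const, nsmul_eq_mul]
    rcases Nat.eq_zero_or_pos E.card with h | h
    · rw [h, hr_edge (by rw [h, Nat.cast_zero])]
      norm_num
    · have hne : (E.card : ℝ) ≠ 0 := Nat.cast_ne_zero.mpr h.ne'
      rw [mul_comm, mul_assoc, div_mul_cancel₀ r hne]
  have hcw : ∑ j, c j * w j = (∑ j ∈ A, c j) + t * r := by
    have hsplit : ∀ j, c j * w j =
        (if t < c j then c j else 0) + (if c j = t then c j * (r / (E.card : ℝ)) else 0) := by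
      intro j
      rw [hw_def]
      dsimp only
      split_ifs with h1 h2
      · exact absurd h2 (ne_of_gt h1)
      · ring
      · ring
      · ring
    calc ∑ j, c j * w j
        = ∑ j, ((if t < c j then c j else 0) +
            (if c j = t then c j * (r / (E.card : ℝ)) else 0)) :=
          Finset.sum_congr rfl (fun j _ => hsplit j)
      _ = (∑ j, (if t < c j then c j else 0)) +
          (∑ j, (if c j = t then c j * (r / (E.card : ℝ)) else 0)) := Finset.sum_add_distrib
      _ = (∑ j ∈ A, c j) + ∑ j ∈ E, c j * (r / (E.card : ℝ)) := by
          rw [hAsum c, hEsum (fun j => c j * (r / (E.card : ℝ)))]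
      _ = (∑ j ∈ A, c j) + t * r := by rw [hEtr]
  -- the optimal dual value
  set D : ℝ := Γ * t + ∑ j, q j with hD_def
  have hD_eq : D = (∑ j ∈ A, c j) + t * r := by
    rw [hD_def, hqsum, Finset.sum_sub_distrib, Finset.sum_const, nsmul_eq_mul, htr, hm_def]
    ring
  -- the primal optimizer
  set z : J → ℝ := fun j => (if x j < 0 then (-1:ℝ) else 1) * w j with hz_def
  have habs_z : ∀ j, |z j| = w j := by
    intro j
    rw [hz_def]
    dsimp only
    rw [abs_mul, abs_of_nonneg (hw0 j)]
    split_ifs <;> norm_num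
  have hz_mem : z ∈ budgetSet J Γ := by
    constructor
    · intro j
      rw [habs_z j]
      exact hw1 j
    · calc ∑ j, |z j| = ∑ j, w j := Finset.sum_congr rfl (fun j _ => habs_z j)
        _ = m + r := hwsum
        _ ≤ Γ := by
            have := min_le_left (Γ - m) (E.card : ℝ)
            rw [hr_def]
            linarith
  have hz_val : ∑ j, ahat j * z j * x j = D := by
    have : ∀ j, ahat j * z j * x j = c j * w j := by
      intro j
      rw [hz_def, hc_def]
      dsimp only
      split_ifs with h
      · rw [abs_of_neg h]
        ring
      · rw [abs_of_nonneg (not_lt.mp h)]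
        ring
    rw [Finset.sum_congr rfl (fun j _ => this j), hcw, hD_eq]
  -- sup characterization
  have hub : ∀ y ∈ (fun z : J → ℝ => ∑ j, ahat j * z j * x j) '' budgetSet J Γ, y ≤ D := by
    rintro y ⟨z', hz', rfl⟩
    exact weak_duality ahat hahat x Γ t q ht0 hq0 hfeas z' hz'
  have hmem : D ∈ (fun z : J → ℝ => ∑ j, ahat j * z j * x j) '' budgetSet J Γ :=
    ⟨z, hz_mem, hz_val⟩
  have hsup : protection ahat x Γ = D := by
    rw [protection]
    exact le_antisymm (csSup_le ⟨D, hmem⟩ hub) (le_csSup ⟨D, hub⟩ hmem)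
  have hfeas' : ∀ j, ahat j * |x j| ≤ t + q j := hfeas
  refine ⟨⟨t, q, ht0, hq0, hfeas', hsup.symm⟩, ?_⟩
  -- part 2
  have hlb : ∀ v ∈ {v : ℝ | ∃ p : ℝ, ∃ q : J → ℝ, 0 ≤ p ∧ (∀ j, 0 ≤ q j) ∧
      (∀ j, ahat j * |x j| ≤ p + q j) ∧ v = Γ * p + ∑ j, q j},
      protection ahat x Γ ≤ v := by
    rintro v ⟨p', q', hp', hq', hfeas'', rfl⟩
    rw [protection]
    apply csSup_le ⟨D, hmem⟩
    rintro y ⟨z', hz', rfl⟩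
    exact weak_duality ahat hahat x Γ p' q' hp' hq' hfeas'' z' hz'
  have hmem2 : protection ahat x Γ ∈ {v : ℝ | ∃ p : ℝ, ∃ q : J → ℝ, 0 ≤ p ∧ (∀ j, 0 ≤ q j) ∧
      (∀ j, ahat j * |x j| ≤ p + q j) ∧ v = Γ * p + ∑ j, q j} :=
    ⟨t, q, ht0, hq0, hfeas', hsup.trans (hD_def ▸ rfl)⟩
  exact le_antisymm (le_csInf ⟨_, hmem2⟩ hlb) (csInf_le ⟨_, hlb⟩ hmem2)
end

section
/- Combinatorial characterization at integer budgets: for every x : J → ℝ and every natural number k with k ≤ card J, the protection function equals the sum of the k largest weighted deviations, i.e. β(x, k) = max over finite subsets S ⊆ J with card S = k of Σ_{j ∈ S} â j * |x j|. -/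
open Finset

lemma exists_topk {J : Type*} [Fintype J] (f : J → ℝ) (k : ℕ) (hk : k ≤ Fintype.card J) :
    ∃ S : Finset J, S.card = k ∧ ∀ j ∈ S, ∀ i ∉ S, f i ≤ f j := by
  classical
  induction k with
  | zero => exact ⟨∅, rfl, by simp⟩
  | succ n ih =>
    obtain ⟨S, hcard, hS⟩ := ih (Nat.le_of_succ_le hk)
    have hne : Sᶜ.Nonempty := by
      rw [← Finset.card_pos, Finset.card_compl, hcard]
      omega
    obtain ⟨i, hi, hmax⟩ := Sᶜ.exists_max_image f hne
    have hiS : i ∉ S := Finset.mem_compl.mp hi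
    refine ⟨insert i S, by rw [Finset.card_insert_of_notMem hiS, hcard], ?_⟩
    intro j hj i' hi'
    have hi'S : i' ∉ S := fun h => hi' (Finset.mem_insert_of_mem h)
    rcases Finset.mem_insert.mp hj with rfl | hjS
    · exact hmax i' (Finset.mem_compl.mpr hi'S)
    · exact hS j hjS i' hi'S

lemma wsum_le {J : Type*} [Fintype J] (f : J → ℝ) (hf : ∀ j, 0 ≤ f j)
    (k : ℕ) (S : Finset J) (hcard : S.card = k)
    (hS : ∀ j ∈ S, ∀ i ∉ S, f i ≤ f j)
    (w : J → ℝ) (hw0 : ∀ j, 0 ≤ w j) (hw1 : ∀ j, w j ≤ 1)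
    (hws : ∑ j, w j ≤ (k : ℝ)) :
    ∑ j, w j * f j ≤ ∑ j ∈ S, f j := by
  rcases Nat.eq_zero_or_pos k with rfl | hkpos
  · have hz : ∀ j, w j = 0 := by
      intro j
      by_contra h
      have hlt : 0 < w j := lt_of_le_of_ne (hw0 j) (Ne.symm h)
      have : 0 < ∑ j, w j := Finset.sum_pos' (fun i _ => hw0 i) ⟨j, Finset.mem_univ j, hlt⟩
      push_cast at hws; linarith
    simp [hz]
    exact Finset.sum_nonneg fun j _ => hf j
  · have hne : S.Nonempty := Finset.card_pos.mp (hcard ▸ hkpos)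
    set t := S.inf' hne f with ht
    have ht0 : 0 ≤ t := by
      obtain ⟨j, hj, hje⟩ := S.exists_mem_eq_inf' hne f
      rw [ht, hje]; exact hf j
    have htle : ∀ j ∈ S, t ≤ f j := fun j hj => Finset.inf'_le f hj
    have hout : ∀ i ∉ S, f i ≤ t := by
      intro i hi
      obtain ⟨j, hj, hje⟩ := S.exists_mem_eq_inf' hne f
      rw [ht, hje]
      exact hS j hj i hi
    have key : ∀ j, w j * f j ≤ max (f j - t) 0 + w j * t := by
      intro j
      rcases le_or_gt t (f j) with h | h
      · have : w j * f j ≤ (f j - t) + w j * t := by nlinarith [hw1 j, hw0 j]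
        calc w j * f j ≤ (f j - t) + w j * t := this
          _ ≤ max (f j - t) 0 + w j * t := by gcongr; exact le_max_left _ _
      · have : w j * f j ≤ w j * t := by nlinarith [hw0 j]
        calc w j * f j ≤ w j * t := this
          _ ≤ max (f j - t) 0 + w j * t := by nlinarith [le_max_right (f j - t) (0:ℝ)]
    calc ∑ j, w j * f j ≤ ∑ j, (max (f j - t) 0 + w j * t) :=
          Finset.sum_le_sum fun j _ => key j
      _ = ∑ j, max (f j - t) 0 + (∑ j, w j) * t := by
          rw [Finset.sum_add_distrib, Finset.sum_mul]
      _ ≤ ∑ j, max (f j - t) 0 + (k : ℝ) * t := by gcongr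
      _ = ∑ j ∈ S, max (f j - t) 0 + (k : ℝ) * t := by
          congr 1
          rw [← Finset.sum_subset (Finset.subset_univ S)]
          intro i _ hi
          simp [max_eq_right, sub_nonpos.mpr (hout i hi)]
      _ = ∑ j ∈ S, (f j - t) + (k : ℝ) * t := by
          congr 1
          exact Finset.sum_congr rfl fun j hj => max_eq_left (sub_nonneg.mpr (htle j hj))
      _ = ∑ j ∈ S, f j := by
          rw [Finset.sum_sub_distrib, Finset.sum_const, ← hcard]
          ring

lemma abs_sign_le_one (y : ℝ) : |Real.sign y| ≤ 1 := by
  rcases lt_trichotomy y 0 with h | h | h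
  · simp [Real.sign_of_neg h]
  · simp [h]
  · simp [Real.sign_of_pos h]

theorem protection_integer_budget {J : Type*} [Fintype J]
    (ahat : J → ℝ) (hahat : ∀ j, 0 ≤ ahat j) (x : J → ℝ)
    (k : ℕ) (hk : k ≤ Fintype.card J) :
    IsGreatest {v : ℝ | ∃ S : Finset J, S.card = k ∧ v = ∑ j ∈ S, ahat j * |x j|}
      (protection ahat x (k : ℝ)) := by
  classical
  set f : J → ℝ := fun j => ahat j * |x j| with hf
  have hf0 : ∀ j, 0 ≤ f j := fun j => mul_nonneg (hahat j) (abs_nonneg _)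
  obtain ⟨S, hcard, hS⟩ := exists_topk f k hk
  set M : ℝ := ∑ j ∈ S, f j with hM
  -- the witness z
  set z : J → ℝ := fun j => if j ∈ S then Real.sign (x j) else 0 with hz
  have hzmem : z ∈ budgetSet J (k : ℝ) := by
    constructor
    · intro j
      simp only [hz]
      split
      · exact abs_sign_le_one _
      · simp
    · calc ∑ j, |z j| = ∑ j ∈ S, |Real.sign (x j)| := by
            rw [← Finset.sum_subset (Finset.subset_univ S)]
            · exact Finset.sum_congr rfl fun j hj => by simp [hz, hj]
            · intro i _ hi; simp [hz, hi]
        _ ≤ ∑ j ∈ S, 1 :=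
            Finset.sum_le_sum fun j _ =>
              abs_sign_le_one _
        _ = (k : ℝ) := by simp [hcard]
  have hzval : ∑ j, ahat j * z j * x j = M := by
    rw [hM, ← Finset.sum_subset (Finset.subset_univ S)]
    · refine Finset.sum_congr rfl fun j hj => ?_
      simp only [hz, if_pos hj, hf]
      rcases lt_trichotomy (x j) 0 with h | h | h
      · rw [Real.sign_of_neg h, abs_of_neg h]; ring
      · simp [h]
      · rw [Real.sign_of_pos h, abs_of_pos h]; ring
    · intro i _ hi; simp [hz, hi]
  have hub : ∀ v ∈ (fun z : J → ℝ => ∑ j, ahat j * z j * x j) '' budgetSet J (k : ℝ), v ≤ M := by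
    rintro v ⟨w, ⟨hw1, hws⟩, rfl⟩
    calc ∑ j, ahat j * w j * x j ≤ ∑ j, |w j| * f j := by
          refine Finset.sum_le_sum fun j _ => ?_
          simp only [hf]
          calc ahat j * w j * x j ≤ |ahat j * w j * x j| := le_abs_self _
            _ = |w j| * (ahat j * |x j|) := by
                rw [abs_mul, abs_mul, abs_of_nonneg (hahat j)]; ring
      _ ≤ M := wsum_le f hf0 k S hcard hS (fun j => |w j|)
          (fun j => abs_nonneg _) hw1 hws
  have hMmem : M ∈ (fun z : J → ℝ => ∑ j, ahat j * z j * x j) '' budgetSet J (k : ℝ) :=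
    ⟨z, hzmem, hzval⟩
  have hbdd : BddAbove ((fun z : J → ℝ => ∑ j, ahat j * z j * x j) '' budgetSet J (k : ℝ)) :=
    ⟨M, hub⟩
  have hprot : protection ahat x (k : ℝ) = M := by
    unfold protection
    exact le_antisymm (csSup_le ⟨M, hMmem⟩ hub) (le_csSup hbdd hMmem)
  constructor
  · exact ⟨S, hcard, hprot⟩
  · rintro v ⟨T, hT, rfl⟩
    rw [hprot]
    have := wsum_le f hf0 k S hcard hS (fun j => if j ∈ T then 1 else 0)
      (fun j => by by_cases h : j ∈ T <;> simp [h]) (fun j => by by_cases h : j ∈ T <;> simp [h])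
      (by simp [hT])
    calc ∑ j ∈ T, ahat j * |x j| = ∑ j, (if j ∈ T then (1:ℝ) else 0) * f j := by
          rw [← Finset.sum_subset (Finset.subset_univ T)]
          · exact Finset.sum_congr rfl fun j hj => by simp [hf, hj]
          · intro i _ hi; simp [hi]
      _ ≤ M := this
end

section
/- Combinatorial characterization at fractional budgets (Bertsimas–Sim): let x : J → ℝ and let Γ ≥ 0 satisfy ⌊Γ⌋ < card J. Then β(x, Γ) = max over pairs (S, t) with S ⊆ J a finite subset of cardinality ⌊Γ⌋ and t ∈ J \ S of Σ_{j ∈ S} â j * |x j| + (Γ − ⌊Γ⌋) * â t * |x t|. -/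
open Finset

private lemma bs_sign_mul_self (x : ℝ) : Real.sign x * x = |x| := by
  rcases lt_trichotomy x 0 with h | h | h
  · rw [Real.sign_of_neg h, abs_of_neg h]; ring
  · simp [h]
  · rw [Real.sign_of_pos h, abs_of_pos h]; ring

private lemma bs_abs_sign_le_one (x : ℝ) : |Real.sign x| ≤ 1 := by
  rcases lt_trichotomy x 0 with h | h | h
  · rw [Real.sign_of_neg h]; norm_num
  · simp [h]
  · rw [Real.sign_of_pos h]; norm_num

private lemma bs_exists_top {J : Type*} [DecidableEq J] (f : J → ℝ) :
    ∀ (k : ℕ) (K : Finset J), k ≤ K.card →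
      ∃ S, S ⊆ K ∧ S.card = k ∧ ∀ i ∈ S, ∀ j ∈ K, j ∉ S → f j ≤ f i := by
  intro k
  induction k with
  | zero => intro K _; exact ⟨∅, empty_subset K, rfl, by simp⟩
  | succ k ih =>
    intro K hk
    have hne : K.Nonempty := card_pos.mp (lt_of_lt_of_le (Nat.succ_pos k) hk)
    obtain ⟨m, hm, hmax⟩ := K.exists_max_image f hne
    obtain ⟨S, hSK, hScard, hS⟩ := ih (K.erase m) (by rw [card_erase_of_mem hm]; omega)
    have hmS : m ∉ S := fun h => (mem_erase.mp (hSK h)).1 rfl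
    refine ⟨insert m S, ?_, ?_, ?_⟩
    · exact insert_subset hm (hSK.trans (erase_subset m K))
    · rw [card_insert_of_notMem hmS, hScard]
    · intro i hi j hj hjS
      rcases mem_insert.mp hi with rfl | hi
      · exact hmax j hj
      · exact hS i hi j (mem_erase.mpr ⟨fun h => hjS (h ▸ mem_insert_self m S), hj⟩)
          (fun h => hjS (mem_insert_of_mem h))

theorem protection_fractional_budget {J : Type*} [Fintype J]
    (ahat : J → ℝ) (hahat : ∀ j, 0 ≤ ahat j) (x : J → ℝ)
    (Γ : ℝ) (hΓ : 0 ≤ Γ) (hfloor : Nat.floor Γ < Fintype.card J) :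
    IsGreatest {v : ℝ | ∃ S : Finset J, ∃ t : J, S.card = Nat.floor Γ ∧ t ∉ S ∧
        v = (∑ j ∈ S, ahat j * |x j|) + (Γ - (Nat.floor Γ : ℝ)) * (ahat t * |x t|)}
      (protection ahat x Γ) := by
  classical
  set k : ℕ := Nat.floor Γ with hk
  set θ : ℝ := Γ - (k : ℝ) with hθ
  have hθ0 : 0 ≤ θ := by
    have := Nat.floor_le hΓ
    simp only [hθ]; linarith
  have hθ1 : θ < 1 := by
    have := Nat.lt_floor_add_one Γ
    simp only [hθ]; linarith
  set f : J → ℝ := fun j => ahat j * |x j| with hf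
  have hf0 : ∀ j, 0 ≤ f j := fun j => mul_nonneg (hahat j) (abs_nonneg _)
  -- choose optimal S and t
  obtain ⟨S, -, hScard, hStop⟩ :=
    bs_exists_top f k (univ : Finset J) (by rw [card_univ]; exact hfloor.le)
  have hcompl : ((univ : Finset J) \ S).Nonempty := by
    rw [← card_pos, card_sdiff_of_subset (subset_univ S), card_univ, hScard]
    omega
  obtain ⟨t, htmem, htmax⟩ := ((univ : Finset J) \ S).exists_max_image f hcompl
  have htS : t ∉ S := (mem_sdiff.mp htmem).2
  -- for each pair (S', t'), a feasible z achieving the combinatorial value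
  have key : ∀ (S' : Finset J) (t' : J), S'.card = k → t' ∉ S' →
      ∃ z ∈ budgetSet J Γ,
        ∑ j, ahat j * z j * x j = (∑ j ∈ S', f j) + θ * f t' := by
    intro S' t' hcard ht'
    refine ⟨fun j => if j ∈ S' then Real.sign (x j) else if j = t' then θ * Real.sign (x j) else 0,
      ⟨?_, ?_⟩, ?_⟩
    · intro j
      dsimp only
      by_cases hj : j ∈ S'
      · simpa [hj] using bs_abs_sign_le_one (x j)
      · by_cases hjt : j = t'
        · subst hjt
          rw [if_neg hj, if_pos rfl, abs_mul, abs_of_nonneg hθ0]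
          calc θ * |Real.sign (x j)| ≤ θ * 1 :=
                mul_le_mul_of_nonneg_left (bs_abs_sign_le_one _) hθ0
            _ ≤ 1 := by linarith
        · simp [hj, hjt]
    · have hsplit := Finset.sum_sdiff (f := fun j =>
        |if j ∈ S' then Real.sign (x j) else if j = t' then θ * Real.sign (x j) else 0|)
        (subset_univ S')
      rw [← hsplit]
      have h1 : ∑ j ∈ S', |if j ∈ S' then Real.sign (x j)
          else if j = t' then θ * Real.sign (x j) else 0| ≤ (k : ℝ) := by
        rw [← hcard]
        calc ∑ j ∈ S', |if j ∈ S' then Real.sign (x j)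
              else if j = t' then θ * Real.sign (x j) else 0|
            ≤ ∑ _j ∈ S', (1 : ℝ) := by
              refine Finset.sum_le_sum fun j hj => ?_
              simpa [hj] using bs_abs_sign_le_one (x j)
          _ = (S'.card : ℝ) := by simp
      have h2 : ∑ j ∈ univ \ S', |if j ∈ S' then Real.sign (x j)
          else if j = t' then θ * Real.sign (x j) else 0| ≤ θ := by
        have ht'mem : t' ∈ univ \ S' := mem_sdiff.mpr ⟨mem_univ _, ht'⟩
        rw [Finset.sum_eq_single_of_mem t' ht'mem (by
          intro j hj hjne
          have hjS : j ∉ S' := (mem_sdiff.mp hj).2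
          simp [hjS, hjne])]
        rw [if_neg ht', if_pos rfl, abs_mul, abs_of_nonneg hθ0]
        calc θ * |Real.sign (x t')| ≤ θ * 1 :=
              mul_le_mul_of_nonneg_left (bs_abs_sign_le_one _) hθ0
          _ = θ := mul_one θ
      have : Γ = θ + (k : ℝ) := by rw [hθ]; ring
      linarith
    · have hsplit := Finset.sum_sdiff (f := fun j => ahat j *
        (if j ∈ S' then Real.sign (x j) else if j = t' then θ * Real.sign (x j) else 0) * x j)
        (subset_univ S')
      rw [← hsplit]
      have h1 : ∑ j ∈ S', ahat j *
          (if j ∈ S' then Real.sign (x j) else if j = t' then θ * Real.sign (x j) else 0) * x j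
          = ∑ j ∈ S', f j := by
        refine Finset.sum_congr rfl fun j hj => ?_
        rw [if_pos hj, mul_assoc, bs_sign_mul_self]
      have h2 : ∑ j ∈ univ \ S', ahat j *
          (if j ∈ S' then Real.sign (x j) else if j = t' then θ * Real.sign (x j) else 0) * x j
          = θ * f t' := by
        have ht'mem : t' ∈ univ \ S' := mem_sdiff.mpr ⟨mem_univ _, ht'⟩
        rw [Finset.sum_eq_single_of_mem t' ht'mem (by
          intro j hj hjne
          have hjS : j ∉ S' := (mem_sdiff.mp hj).2
          simp [hjS, hjne])]
        rw [if_neg ht', if_pos rfl, hf]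
        rw [mul_comm (θ) (Real.sign (x t')), ← mul_assoc, mul_assoc _ θ _, mul_comm θ (x t')]
        rw [mul_assoc (ahat t') (Real.sign (x t'))]
        rw [← mul_assoc (Real.sign (x t'))]
        rw [mul_comm (Real.sign (x t')) (x t')]
        rw [mul_comm (x t') (Real.sign (x t'))]
        rw [bs_sign_mul_self]
        ring
      rw [h1, h2]
      ring
  -- every feasible z has value at most M
  set M : ℝ := (∑ j ∈ S, f j) + θ * f t with hM
  have hub : ∀ z ∈ budgetSet J Γ, ∑ j, ahat j * z j * x j ≤ M := by
    intro z hz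
    obtain ⟨hz1, hz2⟩ := hz
    set w : J → ℝ := fun j => |z j| with hw
    have hw0 : ∀ j, 0 ≤ w j := fun j => abs_nonneg _
    have hw1 : ∀ j, w j ≤ 1 := hz1
    have step1 : ∑ j, ahat j * z j * x j ≤ ∑ j, w j * f j := by
      refine Finset.sum_le_sum fun j _ => ?_
      calc ahat j * z j * x j ≤ |ahat j * z j * x j| := le_abs_self _
        _ = w j * f j := by
            rw [abs_mul, abs_mul, abs_of_nonneg (hahat j)]; ring
    have step2 : ∑ j, w j * f j ≤ M := by
      have e1 : ∑ j, w j * f j = (∑ j, w j * (f j - f t)) + f t * ∑ j, w j := by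
        rw [Finset.mul_sum, ← Finset.sum_add_distrib]
        exact Finset.sum_congr rfl fun j _ => by ring
      have e2 : ∑ j, w j * (f j - f t) ≤ ∑ j ∈ S, (f j - f t) := by
        rw [← Finset.sum_sdiff (subset_univ S)]
        have e2a : ∑ j ∈ univ \ S, w j * (f j - f t) ≤ 0 := by
          refine Finset.sum_nonpos fun j hj => ?_
          have hjS : j ∉ S := (mem_sdiff.mp hj).2
          have : f j ≤ f t := htmax j (mem_sdiff.mpr ⟨mem_univ _, hjS⟩)
          exact mul_nonpos_of_nonneg_of_nonpos (hw0 j) (by linarith)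
        have e2b : ∑ j ∈ S, w j * (f j - f t) ≤ ∑ j ∈ S, (f j - f t) := by
          refine Finset.sum_le_sum fun j hj => ?_
          have : f t ≤ f j := hStop j hj t (mem_univ t) htS
          nlinarith [hw1 j, hw0 j]
        linarith
      have e3 : f t * ∑ j, w j ≤ f t * Γ :=
        mul_le_mul_of_nonneg_left hz2 (hf0 t)
      have e4 : ∑ j ∈ S, (f j - f t) = (∑ j ∈ S, f j) - (k : ℝ) * f t := by
        rw [Finset.sum_sub_distrib, Finset.sum_const, hScard, nsmul_eq_mul]
      rw [e1]
      rw [e4] at e2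
      have : f t * Γ = f t * (k : ℝ) + f t * θ := by rw [hθ]; ring
      nlinarith [hf0 t]
    linarith
  -- nonemptiness and boundedness of the image
  obtain ⟨z₀, hz₀mem, hz₀val⟩ := key S t hScard htS
  have hne : ((fun z : J → ℝ => ∑ j, ahat j * z j * x j) '' budgetSet J Γ).Nonempty :=
    ⟨_, Set.mem_image_of_mem _ hz₀mem⟩
  have hbdd : BddAbove ((fun z : J → ℝ => ∑ j, ahat j * z j * x j) '' budgetSet J Γ) := by
    refine ⟨M, fun v hv => ?_⟩
    obtain ⟨z, hz, rfl⟩ := hv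
    exact hub z hz
  have hsup : protection ahat x Γ = M := by
    refine le_antisymm ?_ ?_
    · exact csSup_le hne fun v hv => by
        obtain ⟨z, hz, rfl⟩ := hv; exact hub z hz
    · have h := le_csSup hbdd (Set.mem_image_of_mem _ hz₀mem)
      rw [hz₀val] at h
      exact h
  constructor
  · exact ⟨S, t, hScard, htS, by rw [hsup]⟩
  · rintro v ⟨S', t', hcard', ht', rfl⟩
    obtain ⟨z, hzmem, hzval⟩ := key S' t' hcard' ht'
    have heq : (∑ j ∈ S', ahat j * |x j|) + (Γ - (Nat.floor Γ : ℝ)) * (ahat t' * |x t'|)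
        = ∑ j, ahat j * z j * x j := by simp only [hzval, hf, hθ, hk]
    rw [heq]
    exact le_csSup hbdd (Set.mem_image_of_mem _ hzmem)
end
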